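/- arXiv:1902.05841 — 8 statements merged into one kernel-verified Lean document; each statement's English description precedes it below -/
import Mathlib

section
/- If Alice's measurements are all compatible (jointly measurable), then the bipartite behavior p(ab|xy) = tr(M_{a|x} ⊗ N_{b|y} ρ) is Bell local, i.e., it admits a decomposition p(ab|xy) = Σ_λ p(λ) p_A(a|x,λ) p_B(b|y,λ) with probability distributions p(λ), p_A(·|x,λ), p_B(·|y,λ). -/
/-!
Let `{E_λ}` be a parent POVM of Alice's measurements, `M_{a|x} = ∑_λ p(a|x,λ) E_λ`. Then
`p(ab|xy) = ∑_λ p(a|x,λ) tr((E_λ ⊗ N_{b|y}) ρ)`, and the numbers `tr((E_λ ⊗ N_{b|y}) ρ)` form,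
for each `y`, a joint distribution of `(λ, b)` whose `λ`-marginal `q(λ) = tr((E_λ ⊗ 1) ρ)` does
not depend on `y`, because `∑_b N_{b|y} = 1`. Writing this joint distribution as `q(λ)` times the
conditional distribution of `b` given `λ` yields the local hidden variable model.
-/

open Matrix Kronecker
open scoped ComplexOrder

theorem exists_eq_marginal_mul_cond {ι Y B : Type*} [Fintype ι] [Fintype B]
    (τ : ι → Y → B → ℝ) (q : ι → ℝ) (hτ : ∀ l y b, 0 ≤ τ l y b)
    (hmarg : ∀ l y, ∑ b, τ l y b = q l) (hq : ∑ l, q l = 1) :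
    ∃ pB : Y → ι → B → ℝ, (∀ y l b, 0 ≤ pB y l b) ∧ (∀ y l, ∑ b, pB y l b = 1) ∧
      ∀ l y b, τ l y b = q l * pB y l b := by
  classical
  obtain ⟨l₀, -, hl₀⟩ := Finset.exists_ne_zero_of_sum_ne_zero (hq ▸ one_ne_zero)
  -- Hidden variables of weight zero borrow the conditional distribution of `l₀`.
  let r : ι → ι := fun l => if q l = 0 then l₀ else l
  have hr : ∀ l, q (r l) ≠ 0 := fun l => by
    by_cases h : q l = 0 <;> simp [r, h, hl₀]
  refine ⟨fun y l b => τ (r l) y b / q (r l), fun y l b => ?_, fun y l => ?_, fun l y b => ?_⟩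
  · exact div_nonneg (hτ _ _ _) (hmarg (r l) y ▸ Finset.sum_nonneg fun b _ => hτ _ _ _)
  · rw [← Finset.sum_div, hmarg, div_self (hr l)]
  · by_cases h : q l = 0
    · have hτ0 : τ l y b = 0 :=
        (Finset.sum_eq_zero_iff_of_nonneg fun b _ => hτ l y b).mp ((hmarg l y).trans h) b
          (Finset.mem_univ b)
      rw [hτ0, h, zero_mul]
    · simp only [r, if_neg h]
      field_simp

namespace Matrix

theorem sum_kronecker {ι l m n p α : Type*} [NonUnitalNonAssocSemiring α] (s : Finset ι)
    (A : ι → Matrix l m α) (B : Matrix n p α) : (∑ i ∈ s, A i) ⊗ₖ B = ∑ i ∈ s, A i ⊗ₖ B := by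
  ext ⟨i₁, i₂⟩ ⟨j₁, j₂⟩
  simp [sum_apply, Finset.sum_mul]

theorem kronecker_sum {ι l m n p α : Type*} [NonUnitalNonAssocSemiring α] (s : Finset ι)
    (A : Matrix l m α) (B : ι → Matrix n p α) : A ⊗ₖ (∑ i ∈ s, B i) = ∑ i ∈ s, A ⊗ₖ B i := by
  ext ⟨i₁, i₂⟩ ⟨j₁, j₂⟩
  simp [sum_apply, Finset.mul_sum]

theorem trace_sum_smul_kronecker_mul {ι m n R : Type*} [Fintype ι] [Fintype m] [Fintype n]
    [CommSemiring R] (c : ι → R) (E : ι → Matrix m m R) (N : Matrix n n R)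
    (ρ : Matrix (m × n) (m × n) R) :
    (((∑ l, c l • E l) ⊗ₖ N) * ρ).trace = ∑ l, c l * ((E l ⊗ₖ N) * ρ).trace := by
  simp only [sum_kronecker, smul_kronecker, Finset.sum_mul, trace_sum, smul_mul, trace_smul,
    smul_eq_mul]

namespace PosSemidef

variable {n : Type*} [Fintype n]

open scoped MatrixOrder in
theorem trace_mul_nonneg {𝕜 : Type*} [RCLike 𝕜] {A B : Matrix n n 𝕜}
    (hA : A.PosSemidef) (hB : B.PosSemidef) : 0 ≤ (A * B).trace := by
  classical
  obtain ⟨C, rfl⟩ := CStarAlgebra.nonneg_iff_eq_star_mul_self.mp hA.nonneg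
  rw [star_eq_conjTranspose, Matrix.mul_assoc, trace_mul_comm]
  exact (hB.mul_mul_conjTranspose_same C).trace_nonneg

theorem re_trace_mul_nonneg {A B : Matrix n n ℂ} (hA : A.PosSemidef) (hB : B.PosSemidef) :
    0 ≤ (A * B).trace.re :=
  (Complex.nonneg_iff.1 (hA.trace_mul_nonneg hB)).1

theorem ofReal_re_trace_mul {A B : Matrix n n ℂ} (hA : A.PosSemidef) (hB : B.PosSemidef) :
    (((A * B).trace.re : ℝ) : ℂ) = (A * B).trace :=
  (Complex.eq_re_of_ofReal_le (Complex.ofReal_zero ▸ hA.trace_mul_nonneg hB)).symm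

end PosSemidef

end Matrix

theorem compatible_measurements_imply_local_behavior_general
    (d : ℕ) (X A Y B : Type) [Fintype A] [Fintype B]
    (M : X → A → Matrix (Fin d) (Fin d) ℂ)
    (N : Y → B → Matrix (Fin d) (Fin d) ℂ)
    (ρ : Matrix (Fin d × Fin d) (Fin d × Fin d) ℂ)
    (hN : ∀ y b, (N y b).PosSemidef) (hNsum : ∀ y, ∑ b, N y b = 1)
    (hρ : ρ.PosSemidef) (hρtr : ρ.trace = 1)
    (hcompat : ∃ (n : ℕ) (E : Fin n → Matrix (Fin d) (Fin d) ℂ)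
        (p : X → Fin n → A → ℝ),
      (∀ l, (E l).PosSemidef) ∧ (∑ l, E l) = 1 ∧
      (∀ x l a, 0 ≤ p x l a) ∧ (∀ x l, ∑ a, p x l a = 1) ∧
      (∀ x a, M x a = ∑ l, (p x l a : ℂ) • E l)) :
    ∃ (n : ℕ) (q : Fin n → ℝ) (pA : X → Fin n → A → ℝ) (pB : Y → Fin n → B → ℝ),
      (∀ l, 0 ≤ q l) ∧ (∑ l, q l = 1) ∧
      (∀ x l a, 0 ≤ pA x l a) ∧ (∀ x l, ∑ a, pA x l a = 1) ∧
      (∀ y l b, 0 ≤ pB y l b) ∧ (∀ y l, ∑ b, pB y l b = 1) ∧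
      (∀ a b x y, ((M x a ⊗ₖ N y b) * ρ).trace
        = ∑ l, ((q l * pA x l a * pB y l b : ℝ) : ℂ)) := by
  obtain ⟨n, E, p, hE, hEsum, hp0, hp1, hMdec⟩ := hcompat
  let τ : Fin n → Y → B → ℝ := fun l y b => ((E l ⊗ₖ N y b) * ρ).trace.re
  let q : Fin n → ℝ := fun l => ((E l ⊗ₖ 1) * ρ).trace.re
  have hmarg : ∀ l y, ∑ b, τ l y b = q l := fun l y => by
    simp only [τ, q, ← Complex.re_sum, ← trace_sum, ← Finset.sum_mul, ← kronecker_sum, hNsum]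
  have hq : ∑ l, q l = 1 := by
    simp only [q, ← Complex.re_sum, ← trace_sum, ← Finset.sum_mul, ← sum_kronecker, hEsum,
      one_kronecker_one, Matrix.one_mul, hρtr, Complex.one_re]
  obtain ⟨pB, hpB0, hpB1, hτ⟩ := exists_eq_marginal_mul_cond τ q
    (fun l y b => ((hE l).kronecker (hN y b)).re_trace_mul_nonneg hρ) hmarg hq
  refine ⟨n, q, p, pB, fun l => ((hE l).kronecker .one).re_trace_mul_nonneg hρ, hq, hp0, hp1,
    hpB0, hpB1, fun a b x y => ?_⟩
  rw [hMdec x a, trace_sum_smul_kronecker_mul]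
  refine Finset.sum_congr rfl fun l _ => ?_
  rw [← ((hE l).kronecker (hN y b)).ofReal_re_trace_mul hρ]
  change _ * ((τ l y b : ℝ) : ℂ) = _
  rw [hτ]
  push_cast
  ring

/-- If Alice's measurements are all compatible (jointly measurable), then the bipartite
behavior `p(ab|xy) = tr((M_{a|x} ⊗ N_{b|y}) ρ)` is Bell local. -/
theorem compatible_measurements_imply_local_behavior
    (d : ℕ) (X A Y B : Type) [Fintype X] [Fintype A] [Fintype Y] [Fintype B]
    (M : X → A → Matrix (Fin d) (Fin d) ℂ)
    (N : Y → B → Matrix (Fin d) (Fin d) ℂ)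
    (ρ : Matrix (Fin d × Fin d) (Fin d × Fin d) ℂ)
    (hM : ∀ x a, (M x a).PosSemidef) (hMsum : ∀ x, ∑ a, M x a = 1)
    (hN : ∀ y b, (N y b).PosSemidef) (hNsum : ∀ y, ∑ b, N y b = 1)
    (hρ : ρ.PosSemidef) (hρtr : ρ.trace = 1)
    (hcompat : ∃ (n : ℕ) (E : Fin n → Matrix (Fin d) (Fin d) ℂ)
        (p : X → Fin n → A → ℝ),
      (∀ l, (E l).PosSemidef) ∧ (∑ l, E l) = 1 ∧
      (∀ x l a, 0 ≤ p x l a) ∧ (∀ x l, ∑ a, p x l a = 1) ∧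
      (∀ x a, M x a = ∑ l, (p x l a : ℂ) • E l)) :
    ∃ (n : ℕ) (q : Fin n → ℝ) (pA : X → Fin n → A → ℝ) (pB : Y → Fin n → B → ℝ),
      (∀ l, 0 ≤ q l) ∧ (∑ l, q l = 1) ∧
      (∀ x l a, 0 ≤ pA x l a) ∧ (∀ x l, ∑ a, pA x l a = 1) ∧
      (∀ y l b, 0 ≤ pB y l b) ∧ (∀ y l, ∑ b, pB y l b = 1) ∧
      (∀ a b x y, ((M x a ⊗ₖ N y b) * ρ).trace
        = ∑ l, ((q l * pA x l a * pB y l b : ℝ) : ℂ)) :=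
  compatible_measurements_imply_local_behavior_general d X A Y B M N ρ hN hNsum hρ hρtr hcompat
end

section
/- The noisy Pauli observables M_x = η X, M_y = η Y, M_z = η Z (as POVMs M^η_{a|x} = η Π_{a|x} + (1−η) 1/2) with η = 1/√3 are triplewise compatible: there exists an 8-outcome qubit POVM {E_{abc}} (a,b,c ∈ {±1}) whose three dichotomic marginals equal the three noisy Pauli measurements. -/
open Matrix
open scoped ComplexOrder

noncomputable section

def pauli : Fin 3 → Matrix (Fin 2) (Fin 2) ℂ :=
  ![!![0, 1; 1, 0], !![0, -Complex.I; Complex.I, 0], !![1, 0; 0, -1]]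

def sgn (a : Fin 2) : ℂ := if a = 0 then 1 else -1

def pauliProj (x : Fin 3) (a : Fin 2) : Matrix (Fin 2) (Fin 2) ℂ :=
  (1 / 2 : ℂ) • (1 + sgn a • pauli x)

def noisyPauli (η : ℝ) (x : Fin 3) (a : Fin 2) : Matrix (Fin 2) (Fin 2) ℂ :=
  (η : ℂ) • pauliProj x a + (((1 - η) / 2 : ℝ) : ℂ) • 1

/-!
The parent POVM is `E_{abc} = (1 + n·σ)/8` with Bloch vector `n = (a, b, c)/√3`.
Since `|n| = 1`, the Pauli anticommutation relations make `A = n·σ` a Hermitian involution, so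
`1 + A = (1 + A)ᴴ (1 + A) / 2` is positive semidefinite. Summing over two of the three signs
cancels the corresponding Pauli terms and leaves `(1 + a σ_x/√3)/2`, the noisy Pauli effect.
-/

theorem Matrix.PosSemidef.one_add_of_mul_self_eq_one {n 𝕜 : Type*} [Fintype n] [DecidableEq n]
    [RCLike 𝕜] {A : Matrix n n 𝕜} (hA : A.IsHermitian) (hAA : A * A = 1) :
    (1 + A).PosSemidef := by
  have hsq : (1 + A)ᴴ * (1 + A) = (2 : 𝕜) • (1 + A) := by
    rw [conjTranspose_add, conjTranspose_one, hA.eq, add_mul, one_mul, mul_add, mul_one, hAA]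
    module
  have hhalf : 1 + A = (2⁻¹ : 𝕜) • ((1 + A)ᴴ * (1 + A)) := by
    rw [hsq, smul_smul]; norm_num
  rw [hhalf]
  exact (posSemidef_conjTranspose_mul_self _).smul (by positivity)

def pauliDot (v : Fin 3 → ℂ) : Matrix (Fin 2) (Fin 2) ℂ := ∑ i, v i • pauli i

lemma isHermitian_pauli (i : Fin 3) : (pauli i).IsHermitian := by
  fin_cases i <;> ext j k <;> fin_cases j <;> fin_cases k <;> simp [pauli]

lemma isHermitian_pauliDot {v : Fin 3 → ℂ} (hv : ∀ i, IsSelfAdjoint (v i)) :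
    (pauliDot v).IsHermitian :=
  isSelfAdjoint_sum _ fun i _ => (hv i).smul (isHermitian_pauli i)

lemma pauliDot_mul_self (v : Fin 3 → ℂ) :
    pauliDot v * pauliDot v = (∑ i, v i ^ 2) • 1 := by
  ext j k
  fin_cases j <;> fin_cases k <;>
    simp [pauliDot, pauli, Fin.sum_univ_three, Matrix.mul_apply, Fin.sum_univ_two] <;>
    ring_nf <;> simp [Complex.I_sq]

lemma sgn_zero : sgn 0 = 1 := rfl
lemma sgn_one : sgn 1 = -1 := rfl

lemma isSelfAdjoint_sgn (a : Fin 2) : IsSelfAdjoint (sgn a) := by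
  fin_cases a
  exacts [.one ℂ, .neg (.one ℂ)]

lemma sgn_sq (a : Fin 2) : sgn a ^ 2 = 1 := by
  fin_cases a <;> simp [sgn]

lemma noisyPauli_eq (η : ℝ) (x : Fin 3) (a : Fin 2) :
    noisyPauli η x a = (1 / 2 : ℂ) • (1 + (η * sgn a) • pauli x) := by
  simp only [noisyPauli, pauliProj]
  push_cast
  module

def parentPOVM (η : ℝ) (a b c : Fin 2) : Matrix (Fin 2) (Fin 2) ℂ :=
  (1 / 8 : ℂ) • (1 + pauliDot ((η : ℂ) • ![sgn a, sgn b, sgn c]))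

lemma parentPOVM_eq (η : ℝ) (a b c : Fin 2) :
    parentPOVM η a b c = (1 / 8 : ℂ) • (1 + (η * sgn a) • pauli 0 + (η * sgn b) • pauli 1
      + (η * sgn c) • pauli 2) := by
  simp [parentPOVM, pauliDot, Fin.sum_univ_three, mul_smul, add_assoc]

lemma sum_parentPOVM (η : ℝ) : ∑ a, ∑ b, ∑ c, parentPOVM η a b c = 1 := by
  simp only [parentPOVM_eq, Fin.sum_univ_two, sgn_zero, sgn_one]
  module

lemma sum_parentPOVM_fst (η : ℝ) (a : Fin 2) :
    ∑ b, ∑ c, parentPOVM η a b c = noisyPauli η 0 a := by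
  simp only [parentPOVM_eq, noisyPauli_eq, Fin.sum_univ_two, sgn_zero, sgn_one]
  module

lemma sum_parentPOVM_snd (η : ℝ) (b : Fin 2) :
    ∑ a, ∑ c, parentPOVM η a b c = noisyPauli η 1 b := by
  simp only [parentPOVM_eq, noisyPauli_eq, Fin.sum_univ_two, sgn_zero, sgn_one]
  module

lemma sum_parentPOVM_thd (η : ℝ) (c : Fin 2) :
    ∑ a, ∑ b, parentPOVM η a b c = noisyPauli η 2 c := by
  simp only [parentPOVM_eq, noisyPauli_eq, Fin.sum_univ_two, sgn_zero, sgn_one]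
  module

lemma posSemidef_parentPOVM (a b c : Fin 2) : (parentPOVM (√3)⁻¹ a b c).PosSemidef := by
  refine (PosSemidef.one_add_of_mul_self_eq_one (isHermitian_pauliDot fun i => ?_) ?_).smul
    (by positivity : (0 : ℂ) ≤ 1 / 8)
  · refine IsSelfAdjoint.mul (Complex.conj_ofReal _) ?_
    fin_cases i <;> exact isSelfAdjoint_sgn _
  · rw [pauliDot_mul_self]
    simp [Fin.sum_univ_three, mul_pow, sgn_sq, ← Complex.ofReal_pow]
    norm_num

/-- The noisy Pauli measurements at visibility `η = 1/√3` are triplewise compatible: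
there is an 8-outcome parent POVM whose three dichotomic marginals are the three
noisy Pauli measurements. -/
theorem noisy_paulis_triplewise_compatible_at_inv_sqrt_three :
    ∃ E : Fin 2 → Fin 2 → Fin 2 → Matrix (Fin 2) (Fin 2) ℂ,
      (∀ a b c, (E a b c).PosSemidef) ∧
      (∑ a, ∑ b, ∑ c, E a b c) = 1 ∧
      (∀ a, (∑ b, ∑ c, E a b c) = noisyPauli (Real.sqrt 3)⁻¹ 0 a) ∧
      (∀ b, (∑ a, ∑ c, E a b c) = noisyPauli (Real.sqrt 3)⁻¹ 1 b) ∧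
      (∀ c, (∑ a, ∑ b, E a b c) = noisyPauli (Real.sqrt 3)⁻¹ 2 c) :=
  ⟨parentPOVM (√3)⁻¹, posSemidef_parentPOVM, sum_parentPOVM _, sum_parentPOVM_fst _,
    sum_parentPOVM_snd _, sum_parentPOVM_thd _⟩

end
end

section
/- For any self-adjoint operators A₁, A₂, A₃, B₁, B₂, B₃ on a Hilbert space with A_x² = B_y² = 1 and [A_x, B_y] = 0 for all x,y, let B = A₁B₁ + A₁B₂ + A₁B₃ + A₂B₁ + A₂B₂ − A₂B₃ + A₃B₁ − A₃B₂; then the operator identity 5·1 − B = ½(A₁+A₂−B₁−B₂)² + ½(A₁−A₂−B₃)² + ½(B₁−B₂−A₃)² holds, and consequently ⟨ψ|B|ψ⟩ ≤ 5 for every unit vector ψ. -/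
/-- Sum-of-squares decomposition and quantum bound 5 for the Bell operator
`B = A₁B₁ + A₁B₂ + A₁B₃ + A₂B₁ + A₂B₂ − A₂B₃ + A₃B₁ − A₃B₂`. -/
theorem sos_bound_FC3
    (H : Type*) [NormedAddCommGroup H] [InnerProductSpace ℂ H] [CompleteSpace H]
    (A B : Fin 3 → (H →L[ℂ] H))
    (hAsa : ∀ x, IsSelfAdjoint (A x)) (hBsa : ∀ y, IsSelfAdjoint (B y))
    (hAsq : ∀ x, A x * A x = 1) (hBsq : ∀ y, B y * B y = 1)
    (hcomm : ∀ x y, A x * B y = B y * A x) :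
    (5 : ℂ) • (1 : H →L[ℂ] H)
      - (A 0 * B 0 + A 0 * B 1 + A 0 * B 2 + A 1 * B 0 + A 1 * B 1 - A 1 * B 2
         + A 2 * B 0 - A 2 * B 1)
    = (1 / 2 : ℂ) • (A 0 + A 1 - B 0 - B 1) ^ 2
      + (1 / 2 : ℂ) • (A 0 - A 1 - B 2) ^ 2
      + (1 / 2 : ℂ) • (B 0 - B 1 - A 2) ^ 2
    ∧ ∀ ψ : H, ‖ψ‖ = 1 →
      (inner ℂ ψ ((A 0 * B 0 + A 0 * B 1 + A 0 * B 2 + A 1 * B 0 + A 1 * B 1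
        - A 1 * B 2 + A 2 * B 0 - A 2 * B 1) ψ) : ℂ).re ≤ 5 := by
  have hsos : (5 : ℂ) • (1 : H →L[ℂ] H)
      - (A 0 * B 0 + A 0 * B 1 + A 0 * B 2 + A 1 * B 0 + A 1 * B 1 - A 1 * B 2
         + A 2 * B 0 - A 2 * B 1)
    = (1 / 2 : ℂ) • (A 0 + A 1 - B 0 - B 1) ^ 2
      + (1 / 2 : ℂ) • (A 0 - A 1 - B 2) ^ 2
      + (1 / 2 : ℂ) • (B 0 - B 1 - A 2) ^ 2 := by
    simp only [sq, mul_sub, sub_mul, mul_add, add_mul, hAsq, hBsq, hcomm]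
    module
  refine ⟨hsos, ?_⟩
  intro ψ hψ
  set S1 := A 0 + A 1 - B 0 - B 1 with hS1def
  set S2 := A 0 - A 1 - B 2 with hS2def
  set S3 := B 0 - B 1 - A 2 with hS3def
  have hS1 : IsSelfAdjoint S1 := (((hAsa 0).add (hAsa 1)).sub (hBsa 0)).sub (hBsa 1)
  have hS2 : IsSelfAdjoint S2 := ((hAsa 0).sub (hAsa 1)).sub (hBsa 2)
  have hS3 : IsSelfAdjoint S3 := ((hBsa 0).sub (hBsa 1)).sub (hAsa 2)
  have key : ∀ S : H →L[ℂ] H, IsSelfAdjoint S → 0 ≤ (inner ℂ ψ ((S ^ 2) ψ) : ℂ).re := by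
    intro S hS
    have h1 : (S ^ 2) ψ = S (S ψ) := rfl
    rw [h1, ← ContinuousLinearMap.adjoint_inner_left, hS.adjoint_eq]
    exact inner_self_nonneg (𝕜 := ℂ) (x := S ψ)
  set Bop := A 0 * B 0 + A 0 * B 1 + A 0 * B 2 + A 1 * B 0 + A 1 * B 1
        - A 1 * B 2 + A 2 * B 0 - A 2 * B 1 with hBdef
  have happ := congrArg (fun T : H →L[ℂ] H => (inner ℂ ψ (T ψ) : ℂ).re) hsos
  simp only [ContinuousLinearMap.sub_apply, ContinuousLinearMap.add_apply,
    ContinuousLinearMap.smul_apply, ContinuousLinearMap.one_apply,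
    inner_sub_right, inner_add_right, inner_smul_right] at happ
  have hinner : (inner ℂ ψ ψ : ℂ) = 1 := by
    rw [inner_self_eq_norm_sq_to_K, hψ]; norm_num
  rw [hinner] at happ
  have h1 := key S1 hS1
  have h2 := key S2 hS2
  have h3 := key S3 hS3
  simp only [Complex.sub_re, Complex.add_re, Complex.mul_re, Complex.ofReal_re] at happ ⊢
  norm_num at happ ⊢
  simp only [sq, ContinuousLinearMap.mul_apply] at h1 h2 h3
  linarith
end

section
/- For self-adjoint operators A₁, A₂, A₃, B₁, B₂, B₃ with A_x² = B_y² = 1 and [A_x, B_y] = 0, the operator 9·1 − B is positive semidefinite, where B = 2A₁B₁ + 2A₁B₂ + A₁B₃ + 2A₂B₁ − A₂B₂ − 2A₂B₃ + A₃B₁ − 2A₃B₂ + 2A₃B₃, via the decomposition 9·1 − B = (1/6)(3A₁ − (2B₁+2B₂+B₃))² + (1/6)(3A₂ − (2B₁−B₂−2B₃))² + (1/6)(3A₃ − (B₁−2B₂+2B₃))². -/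
set_option maxHeartbeats 1000000
open scoped ComplexInnerProductSpace


/-- Sum-of-squares decomposition showing that `9·1 − B` is positive semidefinite, where
`B = 2A₁B₁ + 2A₁B₂ + A₁B₃ + 2A₂B₁ − A₂B₂ − 2A₂B₃ + A₃B₁ − 2A₃B₂ + 2A₃B₃`. -/
theorem sos_bound_FC2
    (H : Type*) [NormedAddCommGroup H] [InnerProductSpace ℂ H] [CompleteSpace H]
    (A B : Fin 3 → (H →L[ℂ] H))
    (hAsa : ∀ x, IsSelfAdjoint (A x)) (hBsa : ∀ y, IsSelfAdjoint (B y))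
    (hAsq : ∀ x, A x * A x = 1) (hBsq : ∀ y, B y * B y = 1)
    (hcomm : ∀ x y, A x * B y = B y * A x) :
    (9 : ℂ) • (1 : H →L[ℂ] H)
      - ((2 : ℂ) • (A 0 * B 0) + (2 : ℂ) • (A 0 * B 1) + A 0 * B 2
         + (2 : ℂ) • (A 1 * B 0) - A 1 * B 1 - (2 : ℂ) • (A 1 * B 2)
         + A 2 * B 0 - (2 : ℂ) • (A 2 * B 1) + (2 : ℂ) • (A 2 * B 2))
    = (1 / 6 : ℂ) • ((3 : ℂ) • A 0 - ((2 : ℂ) • B 0 + (2 : ℂ) • B 1 + B 2)) ^ 2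
      + (1 / 6 : ℂ) • ((3 : ℂ) • A 1 - ((2 : ℂ) • B 0 - B 1 - (2 : ℂ) • B 2)) ^ 2
      + (1 / 6 : ℂ) • ((3 : ℂ) • A 2 - (B 0 - (2 : ℂ) • B 1 + (2 : ℂ) • B 2)) ^ 2
    ∧ ((9 : ℂ) • (1 : H →L[ℂ] H)
      - ((2 : ℂ) • (A 0 * B 0) + (2 : ℂ) • (A 0 * B 1) + A 0 * B 2
         + (2 : ℂ) • (A 1 * B 0) - A 1 * B 1 - (2 : ℂ) • (A 1 * B 2)
         + A 2 * B 0 - (2 : ℂ) • (A 2 * B 1) + (2 : ℂ) • (A 2 * B 2))).IsPositive := by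
  have key : ∀ (a : H →L[ℂ] H) (α β γ : ℂ), a * a = 1 →
      a * B 0 = B 0 * a → a * B 1 = B 1 * a → a * B 2 = B 2 * a →
      ((3:ℂ) • a - (α • B 0 + β • B 1 + γ • B 2)) ^ 2
      = (9 + α^2 + β^2 + γ^2) • (1 : H →L[ℂ] H)
        - (6*α) • (a * B 0) - (6*β) • (a * B 1) - (6*γ) • (a * B 2)
        + (α*β) • (B 0 * B 1 + B 1 * B 0) + (α*γ) • (B 0 * B 2 + B 2 * B 0)
        + (β*γ) • (B 1 * B 2 + B 2 * B 1) := by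
    intro a α β γ ha h0 h1 h2
    rw [pow_two]
    simp only [sub_mul, mul_sub, add_mul, mul_add, smul_mul_assoc, mul_smul_comm, smul_smul,
      ha, hBsq 0, hBsq 1, hBsq 2, h0, h1, h2]
    module
  have e0 : (2:ℂ) • B 0 + (2:ℂ) • B 1 + B 2 = (2:ℂ) • B 0 + (2:ℂ) • B 1 + (1:ℂ) • B 2 := by
    module
  have e1 : (2:ℂ) • B 0 - B 1 - (2:ℂ) • B 2 = (2:ℂ) • B 0 + (-1:ℂ) • B 1 + (-2:ℂ) • B 2 := by
    module
  have e2 : B 0 - (2:ℂ) • B 1 + (2:ℂ) • B 2 = (1:ℂ) • B 0 + (-2:ℂ) • B 1 + (2:ℂ) • B 2 := by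
    module
  have hk0 := key (A 0) 2 2 1 (hAsq 0) (hcomm 0 0) (hcomm 0 1) (hcomm 0 2)
  have hk1 := key (A 1) 2 (-1) (-2) (hAsq 1) (hcomm 1 0) (hcomm 1 1) (hcomm 1 2)
  have hk2 := key (A 2) 1 (-2) 2 (hAsq 2) (hcomm 2 0) (hcomm 2 1) (hcomm 2 2)
  have heq : (9 : ℂ) • (1 : H →L[ℂ] H)
      - ((2 : ℂ) • (A 0 * B 0) + (2 : ℂ) • (A 0 * B 1) + A 0 * B 2
         + (2 : ℂ) • (A 1 * B 0) - A 1 * B 1 - (2 : ℂ) • (A 1 * B 2)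
         + A 2 * B 0 - (2 : ℂ) • (A 2 * B 1) + (2 : ℂ) • (A 2 * B 2))
    = (1 / 6 : ℂ) • ((3 : ℂ) • A 0 - ((2 : ℂ) • B 0 + (2 : ℂ) • B 1 + B 2)) ^ 2
      + (1 / 6 : ℂ) • ((3 : ℂ) • A 1 - ((2 : ℂ) • B 0 - B 1 - (2 : ℂ) • B 2)) ^ 2
      + (1 / 6 : ℂ) • ((3 : ℂ) • A 2 - (B 0 - (2 : ℂ) • B 1 + (2 : ℂ) • B 2)) ^ 2 := by
    rw [e0, e1, e2, hk0, hk1, hk2]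
    norm_num
    module
  refine ⟨heq, ?_⟩
  rw [heq]
  have hpos : ∀ S : H →L[ℂ] H, IsSelfAdjoint S → ((1/6 : ℂ) • S ^ 2).IsPositive := by
    intro S hS
    have hsym := ContinuousLinearMap.isSelfAdjoint_iff_isSymmetric.mp hS
    refine ⟨?_, ?_⟩
    · have : star ((1/6 : ℂ) • S ^ 2) = (1/6 : ℂ) • S ^ 2 := by
        rw [star_smul, star_pow, hS.star_eq]
        congr 1
        norm_num [Complex.ext_iff]
      exact ContinuousLinearMap.isSelfAdjoint_iff_isSymmetric.mp this
    · intro x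
      simp only [ContinuousLinearMap.reApplyInnerSelf_apply, ContinuousLinearMap.smul_apply,
        pow_two, ContinuousLinearMap.mul_apply]
      rw [inner_smul_left]
      have h1 : ⟪S (S x), x⟫ = ⟪S x, S x⟫ := hsym (S x) x
      rw [h1, inner_self_eq_norm_sq_to_K]
      have h2 : (starRingEnd ℂ) (1/6) = 1/6 := by norm_num [Complex.ext_iff]
      rw [h2]
      norm_num
      rw [← Complex.ofReal_pow, Complex.ofReal_re]
      positivity
  have st2 : star (2:ℂ) = 2 := by norm_num [Complex.ext_iff]
  have st3 : star (3:ℂ) = 3 := by norm_num [Complex.ext_iff]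
  have stm1 : star (-1:ℂ) = -1 := by norm_num [Complex.ext_iff]
  have stm2 : star (-2:ℂ) = -2 := by norm_num [Complex.ext_iff]
  have sa0 : IsSelfAdjoint ((3:ℂ) • A 0 - ((2:ℂ) • B 0 + (2:ℂ) • B 1 + B 2)) :=
    (IsSelfAdjoint.smul st3 (hAsa 0)).sub (((IsSelfAdjoint.smul st2 (hBsa 0)).add (IsSelfAdjoint.smul st2 (hBsa 1))).add (hBsa 2))
  have sa1 : IsSelfAdjoint ((3:ℂ) • A 1 - ((2:ℂ) • B 0 - B 1 - (2:ℂ) • B 2)) :=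
    (IsSelfAdjoint.smul st3 (hAsa 1)).sub (((IsSelfAdjoint.smul st2 (hBsa 0)).sub (hBsa 1)).sub (IsSelfAdjoint.smul st2 (hBsa 2)))
  have sa2 : IsSelfAdjoint ((3:ℂ) • A 2 - (B 0 - (2:ℂ) • B 1 + (2:ℂ) • B 2)) :=
    (IsSelfAdjoint.smul st3 (hAsa 2)).sub (((hBsa 0).sub (IsSelfAdjoint.smul st2 (hBsa 1))).add (IsSelfAdjoint.smul st2 (hBsa 2)))
  exact ((hpos _ sa0).add (hpos _ sa1)).add (hpos _ sa2)
end

section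
/- If additionally [A₁, A₂] = 0 (Alice's first two observables are compatible, realized projectively), then the CHSH operator S = A₁B₁ + A₁B₂ + A₂B₁ − A₂B₂ satisfies ‖S‖ ≤ 2, i.e., the local bound: for commuting self-adjoint involutions A₁, A₂ (also commuting with B₁, B₂), ⟨ψ|S|ψ⟩ ≤ 2 for all unit vectors ψ. -/
/-!
Writing `S = A₁(B₁ + B₂) + A₂(B₁ − B₂)` and moving each `A` past the `B`s gives the identity
`S² = 4 − [A₁, A₂][B₁, B₂]`, so `S² = 4` once `A₁` and `A₂` commute. Each product `A_x B_y` of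
commuting self-adjoint elements is self-adjoint, hence so is `S`, and the C⋆-identity gives
`‖S‖² = ‖S²‖ ≤ 4`. Finally `re ⟨ψ, Sψ⟩ ≤ ‖S‖` for every unit vector `ψ`.
-/

section Ring

variable {R : Type*} [Ring R]

def chshOperator (A₁ A₂ B₁ B₂ : R) : R :=
  A₁ * B₁ + A₁ * B₂ + A₂ * B₁ - A₂ * B₂

theorem chshOperator_mul_self {A₁ A₂ B₁ B₂ : R}
    (hA₁ : A₁ * A₁ = 1) (hA₂ : A₂ * A₂ = 1) (hB₁ : B₁ * B₁ = 1) (hB₂ : B₂ * B₂ = 1)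
    (h₁₁ : Commute A₁ B₁) (h₁₂ : Commute A₁ B₂) (h₂₁ : Commute A₂ B₁) (h₂₂ : Commute A₂ B₂) :
    chshOperator A₁ A₂ B₁ B₂ * chshOperator A₁ A₂ B₁ B₂ =
      4 - (A₁ * A₂ - A₂ * A₁) * (B₁ * B₂ - B₂ * B₁) := by
  set P := B₁ + B₂
  set M := B₁ - B₂
  have hS : chshOperator A₁ A₂ B₁ B₂ = A₁ * P + A₂ * M := by
    simp only [chshOperator, P, M]; noncomm_ring
  have hP₁ : Commute P A₁ := (h₁₁.add_right h₁₂).symm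
  have hP₂ : Commute P A₂ := (h₂₁.add_right h₂₂).symm
  have hM₁ : Commute M A₁ := (h₁₁.sub_right h₁₂).symm
  have hM₂ : Commute M A₂ := (h₂₁.sub_right h₂₂).symm
  have hPP : P * P + M * M = 4 := by
    calc P * P + M * M = 2 * (B₁ * B₁) + 2 * (B₂ * B₂) := by simp only [P, M]; noncomm_ring
      _ = 4 := by rw [hB₁, hB₂]; norm_num
  have hPM : P * M = -(B₁ * B₂ - B₂ * B₁) := by
    calc P * M = B₁ * B₁ - B₂ * B₂ - (B₁ * B₂ - B₂ * B₁) := by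
          simp only [P, M]; noncomm_ring
      _ = _ := by rw [hB₁, hB₂, sub_self, zero_sub]
  have hMP : M * P = B₁ * B₂ - B₂ * B₁ := by
    calc M * P = B₁ * B₁ - B₂ * B₂ + (B₁ * B₂ - B₂ * B₁) := by
          simp only [P, M]; noncomm_ring
      _ = _ := by rw [hB₁, hB₂, sub_self, zero_add]
  clear_value P M
  rw [hS, add_mul, mul_add, mul_add, hP₁.mul_mul_mul_comm, hP₂.mul_mul_mul_comm,
    hM₁.mul_mul_mul_comm, hM₂.mul_mul_mul_comm, hA₁, hA₂, hPM, hMP, ← hPP]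
  noncomm_ring

theorem chshOperator_mul_self_of_commute {A₁ A₂ B₁ B₂ : R}
    (hA₁ : A₁ * A₁ = 1) (hA₂ : A₂ * A₂ = 1) (hB₁ : B₁ * B₁ = 1) (hB₂ : B₂ * B₂ = 1)
    (h₁₁ : Commute A₁ B₁) (h₁₂ : Commute A₁ B₂) (h₂₁ : Commute A₂ B₁) (h₂₂ : Commute A₂ B₂)
    (hA : Commute A₁ A₂) :
    chshOperator A₁ A₂ B₁ B₂ * chshOperator A₁ A₂ B₁ B₂ = 4 := by
  rw [chshOperator_mul_self hA₁ hA₂ hB₁ hB₂ h₁₁ h₁₂ h₂₁ h₂₂, hA.eq, sub_self, zero_mul, sub_zero]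

theorem isSelfAdjoint_chshOperator [StarRing R] {A₁ A₂ B₁ B₂ : R}
    (hA₁ : IsSelfAdjoint A₁) (hA₂ : IsSelfAdjoint A₂)
    (hB₁ : IsSelfAdjoint B₁) (hB₂ : IsSelfAdjoint B₂)
    (h₁₁ : Commute A₁ B₁) (h₁₂ : Commute A₁ B₂) (h₂₁ : Commute A₂ B₁) (h₂₂ : Commute A₂ B₂) :
    IsSelfAdjoint (chshOperator A₁ A₂ B₁ B₂) :=
  ((((hA₁.commute_iff hB₁).mp h₁₁).add ((hA₁.commute_iff hB₂).mp h₁₂)).add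
    ((hA₂.commute_iff hB₁).mp h₂₁)).sub ((hA₂.commute_iff hB₂).mp h₂₂)

end Ring

section CStarRing

variable {E : Type*} [NormedRing E] [StarRing E] [CStarRing E]

theorem CStarRing.norm_one_le : ‖(1 : E)‖ ≤ 1 := by
  rcases subsingleton_or_nontrivial E with _ | _
  · simp [Subsingleton.elim (1 : E) 0]
  · exact CStarRing.norm_one.le

theorem IsSelfAdjoint.norm_le_two_of_mul_self_eq_four {x : E} (hx : IsSelfAdjoint x)
    (h : x * x = 4) : ‖x‖ ≤ 2 := by
  have hsq : ‖x‖ * ‖x‖ ≤ 2 * 2 :=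
    calc ‖x‖ * ‖x‖ = ‖((4 : ℕ) : E)‖ := by rw [← sq, ← hx.norm_mul_self, h, Nat.cast_ofNat]
      _ ≤ (4 : ℕ) * ‖(1 : E)‖ := Nat.norm_cast_le 4
      _ ≤ 2 * 2 := by
        have := CStarRing.norm_one_le (E := E)
        push_cast; linarith
  nlinarith [norm_nonneg x]

end CStarRing

theorem ContinuousLinearMap.re_inner_apply_le_opNorm {𝕜 F : Type*} [RCLike 𝕜]
    [NormedAddCommGroup F] [InnerProductSpace 𝕜 F] (T : F →L[𝕜] F) (x : F) :
    RCLike.re (inner 𝕜 x (T x)) ≤ ‖T‖ * ‖x‖ ^ 2 :=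
  calc RCLike.re (inner 𝕜 x (T x)) ≤ ‖x‖ * ‖T x‖ := re_inner_le_norm x (T x)
    _ ≤ ‖x‖ * (‖T‖ * ‖x‖) := by gcongr; exact T.le_opNorm x
    _ = ‖T‖ * ‖x‖ ^ 2 := by ring

/-- The CHSH local bound: if additionally Alice's two observables commute,
then `⟨ψ|S|ψ⟩ ≤ 2` for the CHSH operator `S = A₁B₁ + A₁B₂ + A₂B₁ − A₂B₂`
and every unit vector `ψ`. -/
theorem chsh_local_bound_of_compatible_alice
    (H : Type*) [NormedAddCommGroup H] [InnerProductSpace ℂ H] [CompleteSpace H]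
    (A₁ A₂ B₁ B₂ : H →L[ℂ] H)
    (hA₁ : IsSelfAdjoint A₁) (hA₂ : IsSelfAdjoint A₂)
    (hB₁ : IsSelfAdjoint B₁) (hB₂ : IsSelfAdjoint B₂)
    (hA₁sq : A₁ * A₁ = 1) (hA₂sq : A₂ * A₂ = 1)
    (hB₁sq : B₁ * B₁ = 1) (hB₂sq : B₂ * B₂ = 1)
    (hc₁₁ : A₁ * B₁ = B₁ * A₁) (hc₁₂ : A₁ * B₂ = B₂ * A₁)
    (hc₂₁ : A₂ * B₁ = B₁ * A₂) (hc₂₂ : A₂ * B₂ = B₂ * A₂)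
    (hAA : A₁ * A₂ = A₂ * A₁) :
    ∀ ψ : H, ‖ψ‖ = 1 →
      (inner ℂ ψ ((A₁ * B₁ + A₁ * B₂ + A₂ * B₁ - A₂ * B₂) ψ) : ℂ).re ≤ 2 := by
  intro ψ hψ
  have hS : ‖chshOperator A₁ A₂ B₁ B₂‖ ≤ 2 :=
    IsSelfAdjoint.norm_le_two_of_mul_self_eq_four
      (isSelfAdjoint_chshOperator hA₁ hA₂ hB₁ hB₂ hc₁₁ hc₁₂ hc₂₁ hc₂₂)
      (chshOperator_mul_self_of_commute hA₁sq hA₂sq hB₁sq hB₂sq hc₁₁ hc₁₂ hc₂₁ hc₂₂ hAA)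
  calc (inner ℂ ψ (chshOperator A₁ A₂ B₁ B₂ ψ)).re
      ≤ ‖chshOperator A₁ A₂ B₁ B₂‖ * ‖ψ‖ ^ 2 :=
        (chshOperator A₁ A₂ B₁ B₂).re_inner_apply_le_opNorm ψ
    _ ≤ 2 := by rw [hψ, one_pow, mul_one]; exact hS
end

section
/- There exists a set of three dichotomic qubit POVMs that is triplewise incompatible but not genuinely triplewise incompatible: the noisy Pauli measurements M^η_{a|x} = η Π_{a|x} + (1−η)·1/2 with η = (√2+1)/3 can be written as the uniform convex combination (1/3)(J^{12} + J^{23} + J^{13}), where J^{ij} is defined so that measurements i and j are noisy Paulis at visibility 1/√2 and the remaining one is the Pauli measurement at visibility 1; the uniform mixture gives each measurement visibility (2/√2 + 1)/3 = (√2+1)/3 = η, and each J^{ij} contains a compatible pair, since visibility 1/√2 suffices for pairwise compatibility of two orthogonal noisy Paulis. -/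
open Matrix
open scoped ComplexOrder

noncomputable section

lemma pauli_herm (x : Fin 3) : (pauli x)ᴴ = pauli x := by
  fin_cases x <;> ext i j <;> fin_cases i <;> fin_cases j <;>
    simp [pauli, conjTranspose_apply]

lemma pauli_mul (x y : Fin 3) : pauli x * pauli y =
    if x = y then 1 else
    if (x, y) = (0,1) then Complex.I • pauli 2 else
    if (x, y) = (1,0) then -(Complex.I • pauli 2) else
    if (x, y) = (1,2) then Complex.I • pauli 0 else
    if (x, y) = (2,1) then -(Complex.I • pauli 0) else
    if (x, y) = (2,0) then Complex.I • pauli 1 else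
    -(Complex.I • pauli 1) := by
  fin_cases x <;> fin_cases y <;> ext i j <;> fin_cases i <;> fin_cases j <;>
    simp [pauli, Matrix.mul_apply, Fin.sum_univ_two, Matrix.one_apply] <;> ring_nf <;>
    simp [Complex.I_sq, Complex.ext_iff]

lemma pauli_anticomm {x y : Fin 3} (h : x ≠ y) :
    pauli x * pauli y + pauli y * pauli x = 0 := by
  fin_cases x <;> fin_cases y <;> simp_all [pauli_mul] <;> abel

lemma smul_psd {c : ℝ} (hc : 0 ≤ c) {M : Matrix (Fin 2) (Fin 2) ℂ}
    (hM : M.PosSemidef) : ((c : ℂ) • M).PosSemidef := by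
  rw [posSemidef_iff_dotProduct_mulVec]
  constructor
  · unfold Matrix.IsHermitian
    rw [conjTranspose_smul, hM.1.eq]
    norm_num
  · intro v
    rw [Matrix.smul_mulVec, dotProduct_smul]
    exact mul_nonneg (by exact_mod_cast Complex.zero_le_real.2 hc) (hM.dotProduct_mulVec_nonneg v)

/-- half of (1 + A) with A hermitian involution is PSD -/
lemma half_one_add_psd {A : Matrix (Fin 2) (Fin 2) ℂ} (h1 : Aᴴ = A)
    (h2 : A * A = 1) : ((1/2 : ℂ) • (1 + A)).PosSemidef := by
  have key : ((1/2 : ℂ) • (1 + A)) =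
      ((1/2 : ℂ) • (1 + A))ᴴ * ((1/2 : ℂ) • (1 + A)) := by
    rw [conjTranspose_smul, conjTranspose_add, conjTranspose_one, h1]
    simp only [smul_mul_smul_comm]
    rw [add_mul, one_mul, mul_add, mul_one, h2]
    norm_num
    module
  rw [key]
  exact posSemidef_conjTranspose_mul_self _

lemma sgn_mul_self (a : Fin 2) : sgn a * sgn a = 1 := by
  fin_cases a <;> simp [sgn]

lemma sgn_star (a : Fin 2) : star (sgn a) = sgn a := by
  fin_cases a <;> simp [sgn]

lemma sgn_pauli_herm (a : Fin 2) (x : Fin 3) : (sgn a • pauli x)ᴴ = sgn a • pauli x := by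
  rw [conjTranspose_smul, sgn_star, pauli_herm]

lemma sgn_pauli_sq (a : Fin 2) (x : Fin 3) :
    (sgn a • pauli x) * (sgn a • pauli x) = 1 := by
  rw [smul_mul_smul_comm, sgn_mul_self]
  simp [pauli_mul]

lemma pauliProj_psd (x : Fin 3) (a : Fin 2) : (pauliProj x a).PosSemidef :=
  half_one_add_psd (sgn_pauli_herm a x) (sgn_pauli_sq a x)

lemma noisyPauli_psd {η : ℝ} (h0 : 0 ≤ η) (h1 : η ≤ 1) (x : Fin 3) (a : Fin 2) :
    (noisyPauli η x a).PosSemidef := by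
  unfold noisyPauli
  exact (smul_psd h0 (pauliProj_psd x a)).add (smul_psd (by linarith) .one)

lemma noisyPauli_sum (η : ℝ) (x : Fin 3) : ∑ a, noisyPauli η x a = 1 := by
  rw [Fin.sum_univ_two]
  unfold noisyPauli pauliProj
  have : sgn 0 = 1 ∧ sgn 1 = -1 := by constructor <;> rfl
  rw [this.1, this.2]
  module


/-- `J^{(k)}`: the set where the two measurements other than `k` have visibility `1/√2`
and measurement `k` has visibility `1`. -/
def Jset (k : Fin 3) (x : Fin 3) (a : Fin 2) : Matrix (Fin 2) (Fin 2) ℂ :=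
  noisyPauli (if x = k then 1 else (Real.sqrt 2)⁻¹) x a

lemma noisy_comb (α β γ : ℝ) (x : Fin 3) (a : Fin 2) :
    (1 / 3 : ℂ) • (noisyPauli α x a + noisyPauli β x a + noisyPauli γ x a)
    = noisyPauli ((α + β + γ)/3) x a := by
  unfold noisyPauli
  push_cast
  module

lemma sqrt2_inv_twice : (Real.sqrt 2)⁻¹ + (Real.sqrt 2)⁻¹ = Real.sqrt 2 := by
  have h : Real.sqrt 2 * Real.sqrt 2 = 2 := Real.mul_self_sqrt (by norm_num)
  have hpos : (0:ℝ) < Real.sqrt 2 := Real.sqrt_pos.2 (by norm_num)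
  field_simp
  linarith

lemma comb_eq (x : Fin 3) (a : Fin 2) :
    noisyPauli ((Real.sqrt 2 + 1) / 3) x a
      = (1 / 3 : ℂ) • (Jset 0 x a + Jset 1 x a + Jset 2 x a) := by
  have h := sqrt2_inv_twice
  unfold Jset
  fin_cases x <;> rw [noisy_comb] <;> simp only [Fin.ext_iff] <;> norm_num <;>
    first
      | rw [show (1 + (Real.sqrt 2)⁻¹ + (Real.sqrt 2)⁻¹)/3 = (Real.sqrt 2 + 1)/3 by linarith]
      | rw [show ((Real.sqrt 2)⁻¹ + 1 + (Real.sqrt 2)⁻¹)/3 = (Real.sqrt 2 + 1)/3 by linarith]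
      | rw [show ((Real.sqrt 2)⁻¹ + (Real.sqrt 2)⁻¹ + 1)/3 = (Real.sqrt 2 + 1)/3 by linarith]

lemma sqrt2_inv_mem : 0 ≤ (Real.sqrt 2)⁻¹ ∧ (Real.sqrt 2)⁻¹ ≤ 1 := by
  have h1 : (1:ℝ) ≤ Real.sqrt 2 := by
    rw [show (1:ℝ) = Real.sqrt 1 by simp]
    exact Real.sqrt_le_sqrt (by norm_num)
  constructor
  · positivity
  · rw [inv_le_one_iff₀]; right; exact h1

lemma Jset_psd (k x : Fin 3) (a : Fin 2) : (Jset k x a).PosSemidef := by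
  unfold Jset
  split
  · exact noisyPauli_psd zero_le_one le_rfl x a
  · exact noisyPauli_psd sqrt2_inv_mem.1 sqrt2_inv_mem.2 x a

lemma Jset_sum (k x : Fin 3) : ∑ a, Jset k x a = 1 := noisyPauli_sum _ x


/-- A set of (here three, dichotomic qubit) measurements is (triplewise) compatible if
all of them are post-processings of a single parent POVM. -/
def TriplewiseCompatible (M : Fin 3 → Fin 2 → Matrix (Fin 2) (Fin 2) ℂ) : Prop :=
  ∃ (n : ℕ) (E : Fin n → Matrix (Fin 2) (Fin 2) ℂ) (p : Fin 3 → Fin n → Fin 2 → ℝ),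
    (∀ l, (E l).PosSemidef) ∧ (∑ l, E l) = 1 ∧
    (∀ x l a, 0 ≤ p x l a) ∧ (∀ x l, ∑ a, p x l a = 1) ∧
    (∀ x a, M x a = ∑ l, (p x l a : ℂ) • E l)

/-- The pair of measurements `i ≠ k`, `j ≠ k` inside `J k` is compatible:
there is a parent POVM for the measurements of `J k` other than `k`. -/
def JPairCompatible (k : Fin 3) : Prop :=
  ∃ (n : ℕ) (E : Fin n → Matrix (Fin 2) (Fin 2) ℂ) (p : Fin 3 → Fin n → Fin 2 → ℝ),
    (∀ l, (E l).PosSemidef) ∧ (∑ l, E l) = 1 ∧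
    (∀ x l a, 0 ≤ p x l a) ∧ (∀ x l, ∑ a, p x l a = 1) ∧
    (∀ x, x ≠ k → ∀ a, Jset k x a = ∑ l, (p x l a : ℂ) • E l)

def b0 : Fin 4 → Fin 2 := ![0, 0, 1, 1]
def b1 : Fin 4 → Fin 2 := ![0, 1, 0, 1]

def parentE (i j : Fin 3) (l : Fin 4) : Matrix (Fin 2) (Fin 2) ℂ :=
  (1/4 : ℂ) • (1 + (((Real.sqrt 2)⁻¹ : ℝ) : ℂ) •
    (sgn (b0 l) • pauli i + sgn (b1 l) • pauli j))

lemma c2 : (((Real.sqrt 2)⁻¹ : ℝ) : ℂ) * (((Real.sqrt 2)⁻¹ : ℝ) : ℂ) = 1/2 := by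
  have h : Real.sqrt 2 * Real.sqrt 2 = 2 := Real.mul_self_sqrt (by norm_num)
  rw [← Complex.ofReal_mul, ← mul_inv, h]
  norm_num

lemma parentE_psd (i j : Fin 3) (hij : i ≠ j) (l : Fin 4) : (parentE i j l).PosSemidef := by
  have key : parentE i j l = (1/2 : ℝ) • ((1/2 : ℂ) • (1 +
      (((Real.sqrt 2)⁻¹ : ℝ) : ℂ) • (sgn (b0 l) • pauli i + sgn (b1 l) • pauli j))) := by
    unfold parentE
    push_cast
    module
  rw [key]
  have h := smul_psd (by norm_num : (0:ℝ) ≤ 1/2) (half_one_add_psd (A :=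
      (((Real.sqrt 2)⁻¹ : ℝ) : ℂ) • (sgn (b0 l) • pauli i + sgn (b1 l) • pauli j)) ?herm ?sq)
  · exact_mod_cast h
  case herm =>
    rw [conjTranspose_smul, conjTranspose_add, sgn_pauli_herm, sgn_pauli_herm]
    norm_num
  case sq =>
    rw [smul_mul_smul_comm, c2, add_mul, mul_add, mul_add]
    rw [smul_mul_smul_comm, smul_mul_smul_comm, smul_mul_smul_comm, smul_mul_smul_comm]
    rw [sgn_mul_self, sgn_mul_self]
    have hanti := pauli_anticomm hij
    have hii : pauli i * pauli i = 1 := by simp [pauli_mul]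
    have hjj : pauli j * pauli j = 1 := by simp [pauli_mul]
    have hc : sgn (b0 l) * sgn (b1 l) = sgn (b1 l) * sgn (b0 l) := mul_comm _ _
    rw [hii, hjj, hc]
    rw [show pauli j * pauli i = -(pauli i * pauli j) by
      have h := pauli_anticomm hij
      have : pauli j * pauli i = 0 - pauli i * pauli j := by
        rw [← h]; abel
      simpa using this]
    module

lemma parentE_sum (i j : Fin 3) : ∑ l, parentE i j l = 1 := by
  rw [Fin.sum_univ_four]
  unfold parentE b0 b1
  norm_num [sgn, Matrix.cons_val_two, Matrix.cons_val_three]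
  module

lemma parentE_marg0 (i j : Fin 3) (a : Fin 2) :
    ∑ l, ((if b0 l = a then (1:ℝ) else 0 : ℝ) : ℂ) • parentE i j l
      = noisyPauli (Real.sqrt 2)⁻¹ i a := by
  rw [Fin.sum_univ_four]
  unfold parentE noisyPauli pauliProj b0 b1
  fin_cases a <;> norm_num [sgn] <;> push_cast <;> module

lemma parentE_marg1 (i j : Fin 3) (a : Fin 2) :
    ∑ l, ((if b1 l = a then (1:ℝ) else 0 : ℝ) : ℂ) • parentE i j l
      = noisyPauli (Real.sqrt 2)⁻¹ j a := by
  rw [Fin.sum_univ_four]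
  unfold parentE noisyPauli pauliProj b0 b1
  fin_cases a <;> norm_num [sgn] <;> push_cast <;> module

lemma jpair (k : Fin 3) : JPairCompatible k := by
  obtain ⟨i, j, hij, hik, hjk, hcov⟩ :
      ∃ i j : Fin 3, i ≠ j ∧ i ≠ k ∧ j ≠ k ∧ ∀ x, x ≠ k → x = i ∨ x = j := by
    fin_cases k
    · exact ⟨1, 2, by decide, by decide, by decide, by decide⟩
    · exact ⟨0, 2, by decide, by decide, by decide, by decide⟩
    · exact ⟨0, 1, by decide, by decide, by decide, by decide⟩
  refine ⟨4, parentE i j, fun x l a =>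
    if x = i then (if b0 l = a then 1 else 0)
    else if x = j then (if b1 l = a then 1 else 0) else 1/2,
    parentE_psd i j hij, parentE_sum i j, ?_, ?_, ?_⟩
  · intro x l a
    dsimp only
    split <;> [skip; split] <;> norm_num <;> split <;> norm_num
  · intro x l
    rw [Fin.sum_univ_two]
    dsimp only
    split
    · fin_cases l <;> norm_num [b0]
    · split
      · fin_cases l <;> norm_num [b1]
      · norm_num
  · intro x hx a
    dsimp only
    rcases hcov x hx with rfl | rfl
    · rw [show Jset k x a = noisyPauli (Real.sqrt 2)⁻¹ x a by unfold Jset; rw [if_neg hik]]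
      rw [← parentE_marg0 x j a]
      congr 1
      funext l
      rw [if_pos rfl]
    · rw [show Jset k x a = noisyPauli (Real.sqrt 2)⁻¹ x a by unfold Jset; rw [if_neg hjk]]
      rw [← parentE_marg1 i x a]
      congr 1
      funext l
      rw [if_neg hij.symm, if_pos rfl]

lemma quad_form {M : Matrix (Fin 2) (Fin 2) ℂ} (h : M.PosSemidef) (s : ℝ) :
    0 ≤ ((M 0 0).re) * s^2 - 2 * s * Complex.normSq (M 0 1) +
      (M 1 1).re * Complex.normSq (M 0 1) := by
  have hA : M 0 0 = ((M 0 0).re : ℂ) := by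
    have := congrFun (congrFun h.1.eq 0) 0
    simp [conjTranspose_apply] at this
    exact ((Complex.conj_eq_iff_re).1 this).symm
  have hD : M 1 1 = ((M 1 1).re : ℂ) := by
    have := congrFun (congrFun h.1.eq 1) 1
    simp [conjTranspose_apply] at this
    exact ((Complex.conj_eq_iff_re).1 this).symm
  have hC : M 1 0 = starRingEnd ℂ (M 0 1) := by
    have := congrFun (congrFun h.1.eq 1) 0
    simpa [conjTranspose_apply] using this.symm
  have h1 := h.dotProduct_mulVec_nonneg ![(s : ℂ), -(starRingEnd ℂ (M 0 1))]
  simp only [dotProduct, Matrix.mulVec, Fin.sum_univ_two, Pi.star_apply,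
    Matrix.cons_val_zero, Matrix.cons_val_one, Matrix.head_cons, star_neg,
    RCLike.star_def, map_neg, Complex.conj_conj, Complex.conj_ofReal] at h1
  rw [hA, hD, hC, Complex.le_def] at h1
  have expand : ((s:ℂ)) * (((M 0 0).re : ℂ) * (s:ℂ) + M 0 1 * -(starRingEnd ℂ) (M 0 1)) +
      -(M 0 1) * ((starRingEnd ℂ) (M 0 1) * (s:ℂ) + ((M 1 1).re:ℂ) * -(starRingEnd ℂ) (M 0 1))
      = (((M 0 0).re * s^2 - 2 * s * Complex.normSq (M 0 1) +
      (M 1 1).re * Complex.normSq (M 0 1) : ℝ) : ℂ) := by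
    have hns : M 0 1 * (starRingEnd ℂ) (M 0 1) = (Complex.normSq (M 0 1) : ℂ) :=
      Complex.mul_conj _
    push_cast
    linear_combination (((M 1 1).re : ℂ) - 2*(s:ℂ)) * hns
  rw [expand] at h1
  simpa [← Complex.ofReal_pow] using h1.1

lemma psd_diag {M : Matrix (Fin 2) (Fin 2) ℂ} (h : M.PosSemidef) :
    0 ≤ (M 0 0).re ∧ 0 ≤ (M 1 1).re := by
  constructor
  · have h1 := h.dotProduct_mulVec_nonneg ![1, 0]
    simp [dotProduct, Matrix.mulVec, Fin.sum_univ_two] at h1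
    rw [Complex.le_def] at h1; simpa using h1.1
  · have h1 := h.dotProduct_mulVec_nonneg ![0, 1]
    simp [dotProduct, Matrix.mulVec, Fin.sum_univ_two] at h1
    rw [Complex.le_def] at h1; simpa using h1.1

lemma quad_to_bound (A D N : ℝ) (hA : 0 ≤ A) (hD : 0 ≤ D) (hN : 0 ≤ N)
    (hq : ∀ s : ℝ, 0 ≤ A*s^2 - 2*s*N + D*N) : N ≤ A*D := by
  rcases eq_or_lt_of_le hD with hD0 | hD0
  · have h := hq (N/(A+1))
    have hA1 : (0:ℝ) < A + 1 := by linarith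
    have e : A*(N/(A+1))^2 - 2*(N/(A+1))*N + D*N
        = (A*N^2 - 2*N^2*(A+1) + D*N*(A+1)^2)/(A+1)^2 := by
      field_simp
    rw [e, le_div_iff₀ (by positivity)] at h
    subst hD0
    nlinarith [mul_nonneg hA (sq_nonneg N), sq_nonneg N]
  · have h := hq D
    nlinarith

lemma psd_offdiag {M : Matrix (Fin 2) (Fin 2) ℂ} (h : M.PosSemidef) :
    Complex.normSq (M 0 1) ≤ (M 0 0).re * (M 1 1).re := by
  obtain ⟨hA, hD⟩ := psd_diag h
  exact quad_to_bound _ _ _ hA hD (Complex.normSq_nonneg _)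
    (fun s => by have := quad_form h s; nlinarith [quad_form h s])

lemma key_ineq (m0 m1 m2 X Y A D : ℝ)
    (hm0 : |m0| ≤ 1) (hm1 : |m1| ≤ 1) (hm2 : |m2| ≤ 1)
    (hA : 0 ≤ A) (hD : 0 ≤ D) (hN : X^2 + Y^2 ≤ A * D) :
    m0 * X + m1 * Y + m2 * ((A - D)/2) ≤ Real.sqrt 3 * ((A + D)/2) := by
  set z := (A - D)/2 with hz
  set t := (A + D)/2 with ht
  have ht0 : 0 ≤ t := by rw [ht]; linarith
  have hS : X^2 + Y^2 + z^2 ≤ t^2 := by rw [hz, ht]; nlinarith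
  have hs3 : Real.sqrt 3 ^ 2 = 3 := Real.sq_sqrt (by norm_num)
  have hs3n : 0 ≤ Real.sqrt 3 := Real.sqrt_nonneg 3
  have hm0' : m0^2 ≤ 1 := by nlinarith [abs_nonneg m0, _root_.sq_abs m0]
  have hm1' : m1^2 ≤ 1 := by nlinarith [abs_nonneg m1, _root_.sq_abs m1]
  have hm2' : m2^2 ≤ 1 := by nlinarith [abs_nonneg m2, _root_.sq_abs m2]
  have hXYZ : 0 ≤ X^2 + Y^2 + z^2 := by positivity
  have hCS : (m0 * X + m1 * Y + m2 * z)^2 ≤ 3 * (X^2 + Y^2 + z^2) := by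
    nlinarith [sq_nonneg (m0*Y - m1*X), sq_nonneg (m0*z - m2*X), sq_nonneg (m1*z - m2*Y),
      mul_nonneg (by linarith : (0:ℝ) ≤ 1 - m0^2) hXYZ,
      mul_nonneg (by linarith : (0:ℝ) ≤ 1 - m1^2) hXYZ,
      mul_nonneg (by linarith : (0:ℝ) ≤ 1 - m2^2) hXYZ]
  have hL2 : (m0 * X + m1 * Y + m2 * z)^2 ≤ (Real.sqrt 3 * t)^2 := by
    rw [mul_pow, hs3]
    nlinarith
  calc m0 * X + m1 * Y + m2 * z ≤ |m0 * X + m1 * Y + m2 * z| := le_abs_self _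
    _ = Real.sqrt ((m0 * X + m1 * Y + m2 * z)^2) := (Real.sqrt_sq_eq_abs _).symm
    _ ≤ Real.sqrt ((Real.sqrt 3 * t)^2) := Real.sqrt_le_sqrt hL2
    _ = Real.sqrt 3 * t := Real.sqrt_sq (by positivity)

lemma sqrt_contra : ¬ (Real.sqrt 2 + 1 ≤ Real.sqrt 3) := by
  have h2 : Real.sqrt 2 ^ 2 = 2 := Real.sq_sqrt (by norm_num)
  have h3 : Real.sqrt 3 ^ 2 = 3 := Real.sq_sqrt (by norm_num)
  have h2n : (1:ℝ) ≤ Real.sqrt 2 := by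
    rw [show (1:ℝ) = Real.sqrt 1 by simp]; exact Real.sqrt_le_sqrt (by norm_num)
  have h3n : 0 ≤ Real.sqrt 3 := Real.sqrt_nonneg 3
  intro h
  nlinarith


lemma noisy_diff (η : ℝ) (x : Fin 3) :
    noisyPauli η x 0 - noisyPauli η x 1 = (η:ℂ) • pauli x := by
  unfold noisyPauli pauliProj
  rw [show sgn 0 = 1 from rfl, show sgn 1 = -1 from rfl]
  module

lemma extract01re (n : ℕ) (E : Fin n → Matrix (Fin 2) (Fin 2) ℂ) (m : Fin n → ℝ) (η : ℝ)
    (h : (η:ℂ) • pauli 0 = ∑ l, (m l : ℂ) • E l) :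
    η = ∑ l, m l * (E l 0 1).re := by
  have e := congrFun (congrFun h 0) 1
  simp only [Matrix.sum_apply, Matrix.smul_apply, smul_eq_mul, pauli,
    Matrix.cons_val_zero, Matrix.cons_val_one, Matrix.head_cons] at e
  have e' := congr_arg Complex.re e
  rw [Complex.re_sum] at e'
  simpa [Complex.re_ofReal_mul] using e'

lemma extract01im (n : ℕ) (E : Fin n → Matrix (Fin 2) (Fin 2) ℂ) (m : Fin n → ℝ) (η : ℝ)
    (h : (η:ℂ) • pauli 1 = ∑ l, (m l : ℂ) • E l) :
    ∑ l, m l * (-(E l 0 1).im) = η := by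
  have e := congrFun (congrFun h 0) 1
  simp only [Matrix.sum_apply, Matrix.smul_apply, smul_eq_mul, pauli,
    Matrix.cons_val_zero, Matrix.cons_val_one, Matrix.head_cons] at e
  have e' := congr_arg Complex.im e
  rw [Complex.im_sum] at e'
  simp only [Complex.im_ofReal_mul] at e'
  rw [show ∑ l, m l * -(E l 0 1).im = -∑ l, m l * (E l 0 1).im by
    rw [← Finset.sum_neg_distrib]; exact Finset.sum_congr rfl fun l _ => by ring]
  rw [← e']
  simp

lemma extract00 (n : ℕ) (E : Fin n → Matrix (Fin 2) (Fin 2) ℂ) (m : Fin n → ℝ) (η : ℝ)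
    (h : (η:ℂ) • pauli 2 = ∑ l, (m l : ℂ) • E l) :
    η = ∑ l, m l * (E l 0 0).re ∧ -η = ∑ l, m l * (E l 1 1).re := by
  constructor
  · have e := congrFun (congrFun h 0) 0
    simp only [Matrix.sum_apply, Matrix.smul_apply, smul_eq_mul, pauli,
      Matrix.cons_val_zero, Matrix.cons_val_one, Matrix.head_cons] at e
    have e' := congr_arg Complex.re e
    rw [Complex.re_sum] at e'
    simpa [Complex.re_ofReal_mul] using e'
  · have e := congrFun (congrFun h 1) 1
    simp only [Matrix.sum_apply, Matrix.smul_apply, smul_eq_mul, pauli,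
      Matrix.cons_val_zero, Matrix.cons_val_one, Matrix.head_cons] at e
    have e' := congr_arg Complex.re e
    rw [Complex.re_sum] at e'
    simpa [Complex.re_ofReal_mul] using e'

lemma extract_one (n : ℕ) (E : Fin n → Matrix (Fin 2) (Fin 2) ℂ) (h : (∑ l, E l) = 1) :
    (∑ l, (E l 0 0).re) = 1 ∧ (∑ l, (E l 1 1).re) = 1 := by
  constructor
  · have e := congrFun (congrFun h 0) 0
    simp only [Matrix.sum_apply, Matrix.one_apply] at e
    have e' := congr_arg Complex.re e
    rw [Complex.re_sum] at e'
    simpa using e'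
  · have e := congrFun (congrFun h 1) 1
    simp only [Matrix.sum_apply, Matrix.one_apply] at e
    have e' := congr_arg Complex.re e
    rw [Complex.re_sum] at e'
    simpa using e'

lemma not_compat : ¬ TriplewiseCompatible (noisyPauli ((Real.sqrt 2 + 1) / 3)) := by
  rintro ⟨n, E, p, hpsd, hsumE, hp0, hp1, hM⟩
  set η := (Real.sqrt 2 + 1)/3 with hη
  have key : ∀ x : Fin 3, (η:ℂ) • pauli x
      = ∑ l, ((fun l => p x l 0 - p x l 1) l : ℂ) • E l := by
    intro x
    rw [← noisy_diff η x, hM x 0, hM x 1, ← Finset.sum_sub_distrib]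
    exact Finset.sum_congr rfl fun l _ => by push_cast; rw [sub_smul]
  have hmabs : ∀ x l, |p x l 0 - p x l 1| ≤ 1 := fun x l => by
    have hs := hp1 x l
    rw [Fin.sum_univ_two] at hs
    rw [abs_le]; constructor <;> linarith [hp0 x l 0, hp0 x l 1]
  have e0 := extract01re n E _ η (key 0)
  have e1 := extract01im n E _ η (key 1)
  obtain ⟨e2a, e2d⟩ := extract00 n E _ η (key 2)
  obtain ⟨sA, sD⟩ := extract_one n E hsumE
  have bound : ∀ l, (p 0 l 0 - p 0 l 1) * (E l 0 1).re
      + (p 1 l 0 - p 1 l 1) * (-(E l 0 1).im)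
      + (p 2 l 0 - p 2 l 1) * (((E l 0 0).re - (E l 1 1).re)/2)
      ≤ Real.sqrt 3 * (((E l 0 0).re + (E l 1 1).re)/2) := by
    intro l
    obtain ⟨hA, hD⟩ := psd_diag (hpsd l)
    have hN := psd_offdiag (hpsd l)
    refine key_ineq _ _ _ _ _ _ _ (hmabs 0 l) (hmabs 1 l) (hmabs 2 l) hA hD ?_
    rw [neg_pow, Complex.normSq_apply] at *
    nlinarith [hN]
  have total := Finset.sum_le_sum (fun l (_ : l ∈ Finset.univ) => bound l)
  have hLHS : ∑ l, ((p 0 l 0 - p 0 l 1) * (E l 0 1).re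
      + (p 1 l 0 - p 1 l 1) * (-(E l 0 1).im)
      + (p 2 l 0 - p 2 l 1) * (((E l 0 0).re - (E l 1 1).re)/2))
      = (∑ l, (p 0 l 0 - p 0 l 1) * (E l 0 1).re)
      + (∑ l, (p 1 l 0 - p 1 l 1) * (-(E l 0 1).im))
      + ((∑ l, (p 2 l 0 - p 2 l 1) * (E l 0 0).re)
         - (∑ l, (p 2 l 0 - p 2 l 1) * (E l 1 1).re))/2 := by
    rw [Finset.sum_add_distrib, Finset.sum_add_distrib]
    congr 1
    rw [← Finset.sum_sub_distrib, Finset.sum_div]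
    exact Finset.sum_congr rfl fun l _ => by ring
  have hRHS : ∑ l, Real.sqrt 3 * (((E l 0 0).re + (E l 1 1).re)/2)
      = Real.sqrt 3 * (((∑ l, (E l 0 0).re) + (∑ l, (E l 1 1).re))/2) := by
    rw [← Finset.mul_sum, ← Finset.sum_div, Finset.sum_add_distrib]
  rw [hLHS, hRHS, ← e0, e1, ← e2a, ← e2d, sA, sD] at total
  refine sqrt_contra ?_
  have : η + η + (η - -η)/2 ≤ Real.sqrt 3 * ((1+1)/2) := total
  rw [hη] at this
  linarith

/-- The noisy Pauli measurements at visibility `η = (√2+1)/3` are triplewise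
incompatible but not genuinely triplewise incompatible: they equal the uniform
convex combination of the three sets `J k`, each of which contains a compatible pair. -/
theorem noisy_paulis_incompatible_but_not_genuinely :
    ¬ TriplewiseCompatible (noisyPauli ((Real.sqrt 2 + 1) / 3))
    ∧ (∀ x a, noisyPauli ((Real.sqrt 2 + 1) / 3) x a
        = (1 / 3 : ℂ) • (Jset 0 x a + Jset 1 x a + Jset 2 x a))
    ∧ (∀ k x a, (Jset k x a).PosSemidef)
    ∧ (∀ k x, ∑ a, Jset k x a = 1)
    ∧ (∀ k, JPairCompatible k) :=
  ⟨not_compat, comb_eq, fun k x a => Jset_psd k x a, fun k x => Jset_sum k x, jpair⟩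

end
end

section
/- Steering certifies incompatibility structures for full Schmidt rank states: let |ψ⟩ = (D ⊗ 1)|φ⁺_d⟩ with D positive definite diagonal, tr(D²) = 1, and let {M_{a|x}} be POVMs on ℂ^d. If the assemblage σ_{a|x} = D M_{a|x}ᵀ D admits a decomposition σ_{a|x} = Σ_i p_i Σ_λ π^{C_i}_λ p^{C_i}(a|x,λ) ρ^{C_i}_λ (with ρ^{C_i}_λ density matrices, the inner decomposition holding for x in each hyper-edge of C_i), then {M_{a|x}} is not genuinely C-incompatible: M_{a|x} = Σ_i p_i Σ_λ p^{C_i}(a|x,λ) E^{C_i}_λ with E^{C_i}_λ = D⁻¹ (π^{C_i}_λ ρ^{C_i}_λ)ᵀ D⁻¹ forming valid POVMs with Σ_λ E^{C_i}_λ = 1. -/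
open Matrix
open scoped ComplexOrder

noncomputable section

/-! The map `X ↦ D⁻¹ Xᵀ D⁻¹` is linear, preserves positivity (`D` is Hermitian) and inverts
`X ↦ D Xᵀ D`. Applying it to the decomposition `D M_{a|x}ᵀ D = Σ_i p_i τ^i_{a|x}` of the
assemblage gives `M_{a|x} = Σ_i p_i J^i_{a|x}` with `J^i_{a|x} = D⁻¹ (τ^i_{a|x})ᵀ D⁻¹`, and it
sends the reduced state `Σ_λ π_λ ρ_λ = D²` to `1`, so the `J^i` and the
`E^i_λ = D⁻¹ (π_λ ρ_λ)ᵀ D⁻¹` are POVMs. -/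

section TransposeSandwich

variable {n R : Type*} [Fintype n] [CommRing R]

def transposeSandwich (B : Matrix n n R) : Matrix n n R →ₗ[R] Matrix n n R where
  toFun X := B * Xᵀ * B
  map_add' X Y := by simp only [transpose_add, Matrix.mul_add, Matrix.add_mul]
  map_smul' c X := by
    simp only [transpose_smul, Matrix.mul_smul, Matrix.smul_mul, RingHom.id_apply]

@[simp]
lemma transposeSandwich_apply (B X : Matrix n n R) : transposeSandwich B X = B * Xᵀ * B := rfl

lemma Matrix.PosSemidef.transposeSandwich [PartialOrder R] [StarRing R] {B X : Matrix n n R}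
    (hB : B.IsHermitian) (hX : X.PosSemidef) : (transposeSandwich B X).PosSemidef := by
  simpa only [transposeSandwich_apply, hB.eq] using hX.transpose.mul_mul_conjTranspose_same B

lemma transposeSandwich_inv_transposeSandwich [DecidableEq n] {B : Matrix n n R}
    (hB : Bᵀ = B) (hdet : IsUnit B.det) (X : Matrix n n R) :
    transposeSandwich B⁻¹ (transposeSandwich B X) = X := by
  simp only [transposeSandwich_apply, transpose_mul, transpose_transpose, hB]
  rw [← Matrix.mul_assoc, ← Matrix.mul_assoc, nonsing_inv_mul B hdet, Matrix.one_mul,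
    Matrix.mul_assoc, mul_nonsing_inv B hdet, Matrix.mul_one]

end TransposeSandwich

theorem steering_decomposition_implies_not_genuinely_C_incompatible_general
    (d N m : ℕ) (X A : Type) [Fintype X] [Fintype A]
    (dv : Fin d → ℝ) (hdv : ∀ i, 0 < dv i)
    (D : Matrix (Fin d) (Fin d) ℂ) (hD : D = Matrix.diagonal (fun i => (dv i : ℂ)))
    (C : Fin N → Finset X)
    (M : X → A → Matrix (Fin d) (Fin d) ℂ)
    -- decomposition of the assemblage σ_{a|x} = D M_{a|x}ᵀ D
    (p : Fin N → ℝ)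
    (π : Fin N → Fin m → ℝ) (hπ : ∀ i l, 0 ≤ π i l)
    (q : Fin N → X → Fin m → A → ℝ)
    (ρst : Fin N → Fin m → Matrix (Fin d) (Fin d) ℂ)
    (hρpos : ∀ i l, (ρst i l).PosSemidef)
    (τ : Fin N → X → A → Matrix (Fin d) (Fin d) ℂ)
    (hτpos : ∀ i x a, (τ i x a).PosSemidef)
    (hσdecomp : ∀ x a, D * (M x a)ᵀ * D = ∑ i, (p i : ℂ) • τ i x a)
    (hτlhs : ∀ i, ∀ x ∈ C i, ∀ a,
      τ i x a = ∑ l, ((π i l * q i x l a : ℝ) : ℂ) • ρst i l)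
    (hτred : ∀ i x, ∑ a, τ i x a = ∑ l, ((π i l : ℝ) : ℂ) • ρst i l)
    (hred : ∀ i, (∑ l, ((π i l : ℝ) : ℂ) • ρst i l) = D * D) :
    (∀ i l, (D⁻¹ * (((π i l : ℝ) : ℂ) • ρst i l)ᵀ * D⁻¹).PosSemidef)
    ∧ (∀ i, (∑ l, D⁻¹ * (((π i l : ℝ) : ℂ) • ρst i l)ᵀ * D⁻¹) = 1)
    ∧ ∃ J : Fin N → X → A → Matrix (Fin d) (Fin d) ℂ,
        (∀ i x a, (J i x a).PosSemidef) ∧ (∀ i x, ∑ a, J i x a = 1) ∧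
        (∀ x a, M x a = ∑ i, (p i : ℂ) • J i x a) ∧
        (∀ i, ∀ x ∈ C i, ∀ a,
          J i x a = ∑ l, ((q i x l a : ℝ) : ℂ) •
            (D⁻¹ * (((π i l : ℝ) : ℂ) • ρst i l)ᵀ * D⁻¹)) := by
  have hDsymm : Dᵀ = D := hD ▸ diagonal_transpose _
  have hDherm : D.IsHermitian :=
    hD ▸ isHermitian_diagonal_of_self_adjoint _ (funext fun i => Complex.conj_ofReal _)
  have hDunit : IsUnit D.det := by
    rw [hD, det_diagonal]
    exact (Finset.prod_ne_zero_iff.2 fun i _ => Complex.ofReal_ne_zero.2 (hdv i).ne').isUnit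
  set Φ := transposeSandwich D⁻¹
  have hΦpos {Y : Matrix (Fin d) (Fin d) ℂ} (hY : Y.PosSemidef) : (Φ Y).PosSemidef :=
    hY.transposeSandwich hDherm.inv
  have hΦinv (Y : Matrix (Fin d) (Fin d) ℂ) : Φ (D * Yᵀ * D) = Y :=
    transposeSandwich_inv_transposeSandwich hDsymm hDunit Y
  have hΦred (i : Fin N) : Φ (∑ l, ((π i l : ℝ) : ℂ) • ρst i l) = 1 := by
    rw [hred i]
    simpa only [transpose_one, Matrix.mul_one] using hΦinv 1
  refine ⟨fun i l => hΦpos ((hρpos i l).smul (by exact_mod_cast hπ i l)),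
    fun i => by rw [← hΦred i, map_sum]; rfl, fun i x a => Φ (τ i x a),
    fun i x a => hΦpos (hτpos i x a), fun i x => by rw [← map_sum, hτred, hΦred],
    fun x a => ?_, fun i x hx a => ?_⟩
  · rw [← hΦinv (M x a), hσdecomp, map_sum]
    simp only [map_smul]
  · change Φ (τ i x a) = ∑ l, ((q i x l a : ℝ) : ℂ) • Φ (((π i l : ℝ) : ℂ) • ρst i l)
    simp only [hτlhs i x hx a, map_sum, map_smul, smul_smul, Complex.ofReal_mul, mul_comm]

/-- If, for a full-Schmidt-rank state `|ψ⟩ = (D ⊗ 1)|φ⁺_d⟩` (`D` positive definite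
diagonal, `tr(D²) = 1`), the assemblage `σ_{a|x} = D M_{a|x}ᵀ D` decomposes as
`σ_{a|x} = Σ_i p_i τ^{C_i}_{a|x}` with `τ^{C_i}_{a|x} = Σ_λ π^{C_i}_λ p^{C_i}(a|x,λ) ρ^{C_i}_λ`
on each hyper-edge `C_i`, then `{M_{a|x}}` is not genuinely `C`-incompatible:
`M_{a|x} = Σ_i p_i J^{C_i}_{a|x}` where the `J^{C_i}` are POVM sets satisfying
`J^{C_i}_{a|x} = Σ_λ p^{C_i}(a|x,λ) E^{C_i}_λ` on `C_i`, with
`E^{C_i}_λ = D⁻¹ (π^{C_i}_λ ρ^{C_i}_λ)ᵀ D⁻¹` valid POVMs summing to `1`. -/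
theorem steering_decomposition_implies_not_genuinely_C_incompatible
    (d N m : ℕ) (X A : Type) [Fintype X] [Fintype A]
    (dv : Fin d → ℝ) (hdv : ∀ i, 0 < dv i) (htr : ∑ i, dv i ^ 2 = 1)
    (D : Matrix (Fin d) (Fin d) ℂ) (hD : D = Matrix.diagonal (fun i => (dv i : ℂ)))
    (C : Fin N → Finset X)
    (M : X → A → Matrix (Fin d) (Fin d) ℂ)
    (hM : ∀ x a, (M x a).PosSemidef) (hMsum : ∀ x, ∑ a, M x a = 1)
    -- decomposition of the assemblage σ_{a|x} = D M_{a|x}ᵀ D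
    (p : Fin N → ℝ) (hp : ∀ i, 0 ≤ p i) (hpsum : ∑ i, p i = 1)
    (π : Fin N → Fin m → ℝ) (hπ : ∀ i l, 0 ≤ π i l) (hπsum : ∀ i, ∑ l, π i l = 1)
    (q : Fin N → X → Fin m → A → ℝ)
    (hq : ∀ i x l a, 0 ≤ q i x l a) (hqsum : ∀ i x l, ∑ a, q i x l a = 1)
    (ρst : Fin N → Fin m → Matrix (Fin d) (Fin d) ℂ)
    (hρpos : ∀ i l, (ρst i l).PosSemidef) (hρtr : ∀ i l, (ρst i l).trace = 1)
    (τ : Fin N → X → A → Matrix (Fin d) (Fin d) ℂ)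
    (hτpos : ∀ i x a, (τ i x a).PosSemidef)
    (hσdecomp : ∀ x a, D * (M x a)ᵀ * D = ∑ i, (p i : ℂ) • τ i x a)
    (hτlhs : ∀ i, ∀ x ∈ C i, ∀ a,
      τ i x a = ∑ l, ((π i l * q i x l a : ℝ) : ℂ) • ρst i l)
    (hτred : ∀ i x, ∑ a, τ i x a = ∑ l, ((π i l : ℝ) : ℂ) • ρst i l)
    (hred : ∀ i, (∑ l, ((π i l : ℝ) : ℂ) • ρst i l) = D * D) :
    (∀ i l, (D⁻¹ * (((π i l : ℝ) : ℂ) • ρst i l)ᵀ * D⁻¹).PosSemidef)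
    ∧ (∀ i, (∑ l, D⁻¹ * (((π i l : ℝ) : ℂ) • ρst i l)ᵀ * D⁻¹) = 1)
    ∧ ∃ J : Fin N → X → A → Matrix (Fin d) (Fin d) ℂ,
        (∀ i x a, (J i x a).PosSemidef) ∧ (∀ i x, ∑ a, J i x a = 1) ∧
        (∀ x a, M x a = ∑ i, (p i : ℂ) • J i x a) ∧
        (∀ i, ∀ x ∈ C i, ∀ a,
          J i x a = ∑ l, ((q i x l a : ℝ) : ℂ) •
            (D⁻¹ * (((π i l : ℝ) : ℂ) • ρst i l)ᵀ * D⁻¹)) :=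
  steering_decomposition_implies_not_genuinely_C_incompatible_general d N m X A dv hdv D hD C M p π
    hπ q ρst hρpos τ hτpos hσdecomp hτlhs hτred hred

end
end

section
/- Sum-of-squares bound for the chained Bell operator: for self-adjoint operators A₁, A₂, A₃, B₁, B₂, B₃ with A_x² = B_y² = 1 and [A_x, B_y] = 0, the chained Bell operator S = A₁B₁ + A₂B₁ + A₂B₂ + A₃B₂ + A₃B₃ − A₁B₃ satisfies ⟨ψ|S|ψ⟩ ≤ 6 cos(π/6) = 3√3 for every unit vector ψ. -/
/-!
Write `u x = A x ψ` and `v y = B y ψ`; these are unit vectors, and by self-adjointness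
`⟪ψ, A x (B y ψ)⟫ = ⟪u x, v y⟫`. So the expectation of `S` is
`re ⟪u 0, v 0 - v 2⟫ + re ⟪u 1, v 0 + v 1⟫ + re ⟪u 2, v 1 + v 2⟫`, which Cauchy–Schwarz bounds by
`a + b + c` with `a = ‖v 0 - v 2‖`, `b = ‖v 0 + v 1‖`, `c = ‖v 1 + v 2‖`. The identity
`a² + b² + c² + ‖v 0 - v 1 + v 2‖² = 3 (‖v 0‖² + ‖v 1‖² + ‖v 2‖²) = 9` gives `a² + b² + c² ≤ 9`,
hence `a + b + c ≤ √(3 · 9) = 3√3`.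
-/

open RCLike

theorem add_add_sq_le_three_mul (a b c : ℝ) : (a + b + c) ^ 2 ≤ 3 * (a ^ 2 + b ^ 2 + c ^ 2) := by
  nlinarith [sq_nonneg (a - b), sq_nonneg (b - c), sq_nonneg (a - c)]

theorem parallelogram_law_chained3 (𝕜 : Type*) {E : Type*} [RCLike 𝕜] [NormedAddCommGroup E]
    [InnerProductSpace 𝕜 E] (v₀ v₁ v₂ : E) :
    ‖v₀ - v₂‖ ^ 2 + ‖v₀ + v₁‖ ^ 2 + ‖v₁ + v₂‖ ^ 2 + ‖v₀ - v₁ + v₂‖ ^ 2 =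
      3 * (‖v₀‖ ^ 2 + ‖v₁‖ ^ 2 + ‖v₂‖ ^ 2) := by
  rw [norm_add_sq (𝕜 := 𝕜) (v₀ - v₁), norm_sub_sq (𝕜 := 𝕜) v₀ v₁, norm_sub_sq (𝕜 := 𝕜) v₀ v₂,
    norm_add_sq (𝕜 := 𝕜) v₀ v₁, norm_add_sq (𝕜 := 𝕜) v₁ v₂, inner_sub_left, map_sub]
  ring

section InnerProductSpace

variable {𝕜 E : Type*} [RCLike 𝕜] [NormedAddCommGroup E] [InnerProductSpace 𝕜 E]

theorem re_inner_chained3_le {u v : Fin 3 → E} (hu : ∀ i, ‖u i‖ ≤ 1) (hv : ∀ j, ‖v j‖ ≤ 1) :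
    re (inner 𝕜 (u 0) (v 0 - v 2)) + re (inner 𝕜 (u 1) (v 0 + v 1))
      + re (inner 𝕜 (u 2) (v 1 + v 2)) ≤ 3 * √3 := by
  have hre : ∀ i w, re (inner 𝕜 (u i) w) ≤ ‖w‖ := fun i w =>
    (re_inner_le_norm _ _).trans (mul_le_of_le_one_left (norm_nonneg _) (hu i))
  have hv_sq : ∀ j, ‖v j‖ ^ 2 ≤ 1 := fun j => pow_le_one₀ (norm_nonneg _) (hv j)
  have hsum_sq : ‖v 0 - v 2‖ ^ 2 + ‖v 0 + v 1‖ ^ 2 + ‖v 1 + v 2‖ ^ 2 ≤ 9 := by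
    nlinarith [parallelogram_law_chained3 𝕜 (v 0) (v 1) (v 2), sq_nonneg ‖v 0 - v 1 + v 2‖,
      hv_sq 0, hv_sq 1, hv_sq 2]
  have hsum : ‖v 0 - v 2‖ + ‖v 0 + v 1‖ + ‖v 1 + v 2‖ ≤ 3 * √3 := by
    refine (le_abs_self _).trans (abs_le_of_sq_le_sq ?_ (by positivity))
    have h27 : (3 * √3) ^ 2 = 27 := by rw [mul_pow, Real.sq_sqrt (by norm_num)]; norm_num
    linarith [add_add_sq_le_three_mul ‖v 0 - v 2‖ ‖v 0 + v 1‖ ‖v 1 + v 2‖]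
  linarith [hre 0 (v 0 - v 2), hre 1 (v 0 + v 1), hre 2 (v 1 + v 2)]

variable [CompleteSpace E]

theorem IsSelfAdjoint.inner_mul_apply {A : E →L[𝕜] E} (hA : IsSelfAdjoint A) (B : E →L[𝕜] E)
    (x y : E) : inner 𝕜 x ((A * B) y) = inner 𝕜 (A x) (B y) :=
  (hA.isSymmetric x (B y)).symm

theorem IsSelfAdjoint.norm_apply_of_mul_self_eq_one {A : E →L[𝕜] E} (hA : IsSelfAdjoint A)
    (hA_sq : A * A = 1) (x : E) : ‖A x‖ = ‖x‖ :=
  A.norm_map_of_mem_unitary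
    (Unitary.mem_iff.2 ⟨by rw [hA.star_eq, hA_sq], by rw [hA.star_eq, hA_sq]⟩) x

end InnerProductSpace

theorem chained3_tsirelson_bound_general
    (H : Type*) [NormedAddCommGroup H] [InnerProductSpace ℂ H] [CompleteSpace H]
    (A B : Fin 3 → (H →L[ℂ] H))
    (hAsa : ∀ x, IsSelfAdjoint (A x)) (hBsa : ∀ y, IsSelfAdjoint (B y))
    (hAsq : ∀ x, A x * A x = 1) (hBsq : ∀ y, B y * B y = 1) :
    ∀ ψ : H, ‖ψ‖ = 1 →
      (inner ℂ ψ ((A 0 * B 0 + A 1 * B 0 + A 1 * B 1 + A 2 * B 1 + A 2 * B 2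
        - A 0 * B 2) ψ) : ℂ).re ≤ 3 * Real.sqrt 3 := by
  intro ψ hψ
  have hA : ∀ x, ‖A x ψ‖ ≤ 1 := fun x =>
    ((hAsa x).norm_apply_of_mul_self_eq_one (hAsq x) ψ).trans_le hψ.le
  have hB : ∀ y, ‖B y ψ‖ ≤ 1 := fun y =>
    ((hBsa y).norm_apply_of_mul_self_eq_one (hBsq y) ψ).trans_le hψ.le
  calc _ = re (inner ℂ (A 0 ψ) (B 0 ψ - B 2 ψ)) + re (inner ℂ (A 1 ψ) (B 0 ψ + B 1 ψ))
          + re (inner ℂ (A 2 ψ) (B 1 ψ + B 2 ψ)) := by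
        simp only [add_apply, sub_apply, inner_add_right, inner_sub_right,
          (hAsa _).inner_mul_apply, map_add, map_sub, re_to_complex, Complex.add_re, Complex.sub_re]
        ring
    _ ≤ 3 * √3 := re_inner_chained3_le hA hB

/-- Tsirelson bound of the 3-input chained Bell operator:
`S = A₁B₁ + A₂B₁ + A₂B₂ + A₃B₂ + A₃B₃ − A₁B₃` satisfies `⟨ψ|S|ψ⟩ ≤ 3√3`
for commuting self-adjoint involutions and unit vectors `ψ`. -/
theorem chained3_tsirelson_bound
    (H : Type*) [NormedAddCommGroup H] [InnerProductSpace ℂ H] [CompleteSpace H]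
    (A B : Fin 3 → (H →L[ℂ] H))
    (hAsa : ∀ x, IsSelfAdjoint (A x)) (hBsa : ∀ y, IsSelfAdjoint (B y))
    (hAsq : ∀ x, A x * A x = 1) (hBsq : ∀ y, B y * B y = 1)
    (hcomm : ∀ x y, A x * B y = B y * A x) :
    ∀ ψ : H, ‖ψ‖ = 1 →
      (inner ℂ ψ ((A 0 * B 0 + A 1 * B 0 + A 1 * B 1 + A 2 * B 1 + A 2 * B 2
        - A 0 * B 2) ψ) : ℂ).re ≤ 3 * Real.sqrt 3 :=
  chained3_tsirelson_bound_general H A B hAsa hBsa hAsq hBsq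
end
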